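/- Let X be a normed space and J : X → ℝ be coercive and bounded below, and suppose J has the 'almost lower semicontinuity' property: for every bounded sequence (u_n) in X there exist a bounded sequence (v_n) in X and v ∈ X with v_n ⇀ v weakly, J(u_n) ≥ J(v_n) for all n, and liminf_n J(v_n) ≥ J(v). Then J attains its infimum: there exists v ∈ X with J(v) = inf_{u ∈ X} J(u). -/
import Mathlib


open Filter

/-- Global minimization: a coercive, bounded-below functional on a normed space which is
almost lower semicontinuous in the sense of the paper (for every bounded sequence `uₙ`
there are a bounded sequence `vₙ` weakly converging to some `v` with `J(uₙ) ≥ J(vₙ)` and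
`liminf J(vₙ) ≥ J(v)`) attains its infimum. -/
theorem stmt8 (X : Type*) [NormedAddCommGroup X] [NormedSpace ℝ X] (J : X → ℝ)
    (hcoercive : ∀ M : ℝ, ∃ R : ℝ, ∀ u : X, R < ‖u‖ → M ≤ J u)
    (hbelow : BddBelow (Set.range J))
    (hALS : ∀ u : ℕ → X, (∃ C : ℝ, ∀ n, ‖u n‖ ≤ C) →
      ∃ (v : ℕ → X) (v₀ : X),
        (∃ C : ℝ, ∀ n, ‖v n‖ ≤ C) ∧
        (∀ f : X →L[ℝ] ℝ, Tendsto (fun n => f (v n)) atTop (nhds (f v₀))) ∧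
        (∀ n, J (v n) ≤ J (u n)) ∧
        J v₀ ≤ liminf (fun n => J (v n)) atTop) :
    ∃ v : X, ∀ u : X, J v ≤ J u := by
  set m : ℝ := sInf (Set.range J) with hm
  have hne : (Set.range J).Nonempty := ⟨J 0, ⟨0, rfl⟩⟩
  -- minimizing sequence
  have hseq : ∀ n : ℕ, ∃ u : X, J u < m + 1 / (n + 1) := by
    intro n
    have hlt : m < m + 1 / (n + 1) := lt_add_of_pos_right m (by positivity)
    obtain ⟨y, ⟨u, rfl⟩, hy⟩ := exists_lt_of_csInf_lt hne hlt
    exact ⟨u, hy⟩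
  choose u hu using hseq
  -- boundedness of the minimizing sequence
  obtain ⟨R, hR⟩ := hcoercive (m + 2)
  have hub : ∃ C : ℝ, ∀ n, ‖u n‖ ≤ C := by
    refine ⟨R, fun n => ?_⟩
    by_contra h
    push_neg at h
    have h1 : (1 : ℝ) / (n + 1) ≤ 1 := by
      rw [div_le_one (by positivity)]; linarith [Nat.cast_nonneg (α := ℝ) n]
    have := hR (u n) h
    have := hu n
    linarith
  obtain ⟨v, v₀, hvb, hw, hle, hlim⟩ := hALS u hub
  refine ⟨v₀, fun w => ?_⟩
  have hJw : m ≤ J w := csInf_le hbelow ⟨w, rfl⟩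
  -- liminf J (v n) ≤ m
  obtain ⟨b, hb⟩ := hbelow
  have hbd : IsBoundedUnder (· ≥ ·) atTop (fun n => J (v n)) :=
    isBoundedUnder_of ⟨b, fun n => hb ⟨v n, rfl⟩⟩
  have htend : Tendsto (fun n : ℕ => m + 1 / (n + 1 : ℝ)) atTop (nhds m) := by
    have : Tendsto (fun n : ℕ => 1 / (n + 1 : ℝ)) atTop (nhds 0) :=
      tendsto_one_div_add_atTop_nhds_zero_nat
    simpa using tendsto_const_nhds.add this
  have hcb : IsCoboundedUnder (· ≥ ·) atTop (fun n : ℕ => m + 1 / (n + 1 : ℝ)) :=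
    htend.isCoboundedUnder_ge
  have h1 : liminf (fun n => J (v n)) atTop ≤
      liminf (fun n : ℕ => m + 1 / (n + 1 : ℝ)) atTop := by
    refine liminf_le_liminf (Eventually.of_forall fun n => ?_) hbd hcb
    exact (hle n).trans (hu n).le
  have h2 : liminf (fun n : ℕ => m + 1 / (n + 1 : ℝ)) atTop = m := htend.liminf_eq
  linarith [hlim, h1, h2.le]
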